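/- arXiv:2411.00708 — 2 statements merged into one kernel-verified Lean document; each statement's English description precedes it below -/
import Mathlib

section
/- For a DAG G on X and a vertex v, the following are equivalent: (1) there is no A ⊆ X with LCA_G(A) = {v}; (2) some child u of v satisfies C_G(u) = C_G(v), or |LCA_G(C_G(v))| ≥ 2; (3) LCA_G(C_G(v)) ≠ {v}. -/
/-- A vertex is a leaf if it has no outgoing edge. -/
def IsLeaf {V : Type*} (E : V → V → Prop) (v : V) : Prop := ∀ u, ¬ E v u

/-- The cluster of `v`: the set of leaves reachable from `v` (descendant leaves). -/
def cluster {V : Type*} (E : V → V → Prop) (v : V) : Set V :=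
  {x | IsLeaf E x ∧ Relation.ReflTransGen E v x}

/-- `v` is a least common ancestor of `A`: it is a common ancestor
(`A ⊆ cluster E v`) and no strict descendant of `v` is a common ancestor. -/
def IsLCA {V : Type*} (E : V → V → Prop) (A : Set V) (v : V) : Prop :=
  A ⊆ cluster E v ∧ ∀ w, Relation.TransGen E v w → ¬ A ⊆ cluster E w

/-- Acyclicity of a directed graph. -/
def Acyclic {V : Type*} (E : V → V → Prop) : Prop := ∀ v, ¬ Relation.TransGen E v v

lemma cluster_mono {V : Type*} {E : V → V → Prop} {v w : V}
    (h : Relation.ReflTransGen E v w) : cluster E w ⊆ cluster E v :=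
  fun x hx => ⟨hx.1, h.trans hx.2⟩

lemma acyclic_wf {V : Type*} [Fintype V] {E : V → V → Prop} (hacyc : Acyclic E) :
    WellFounded (fun a b => Relation.TransGen E b a) := by
  have h1 : IsIrrefl V (fun a b => Relation.TransGen E b a) := ⟨fun a h => hacyc a h⟩
  have h2 : IsTrans V (fun a b => Relation.TransGen E b a) :=
    ⟨fun a b c hab hbc => hbc.trans hab⟩
  exact Finite.wellFounded_of_trans_of_irrefl _

lemma exists_lca {V : Type*} [Fintype V] {E : V → V → Prop} (hacyc : Acyclic E)
    (A : Set V) : ∀ w, A ⊆ cluster E w →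
      ∃ u, Relation.ReflTransGen E w u ∧ IsLCA E A u := by
  intro w
  induction w using (acyclic_wf hacyc).induction with
  | _ w ih =>
    intro hw
    by_cases h : ∀ u, Relation.TransGen E w u → ¬ A ⊆ cluster E u
    · exact ⟨w, .refl, hw, h⟩
    · push_neg at h
      obtain ⟨u, hu, hAu⟩ := h
      obtain ⟨t, ht, hlca⟩ := ih u hu hAu
      exact ⟨t, hu.to_reflTransGen.trans ht, hlca⟩

/-- Characterization of vertices that are not the unique LCA of any subset of
leaves. -/
theorem not_klca_characterization {V : Type*} [Fintype V] (E : V → V → Prop)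
    (hacyc : Acyclic E) (v : V) :
    ((¬ ∃ A : Set V, A ⊆ {x | IsLeaf E x} ∧ {w | IsLCA E A w} = {v}) ↔
      ((∃ u, E v u ∧ cluster E u = cluster E v) ∨
        2 ≤ {w | IsLCA E (cluster E v) w}.ncard)) ∧
    (((∃ u, E v u ∧ cluster E u = cluster E v) ∨
        2 ≤ {w | IsLCA E (cluster E v) w}.ncard) ↔
      {w | IsLCA E (cluster E v) w} ≠ {v}) := by
  set S := {w | IsLCA E (cluster E v) w} with hS
  -- If no child has the same cluster, then v is an LCA of its own cluster.
  have hvS : (∀ u, E v u → cluster E u ≠ cluster E v) → v ∈ S := by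
    intro hnochild
    refine ⟨le_refl _, fun w hw hsub => ?_⟩
    have hwv : cluster E w ⊆ cluster E v := cluster_mono hw.to_reflTransGen
    have heq : cluster E w = cluster E v := le_antisymm hwv hsub
    obtain ⟨c, hc, hcw⟩ := (Relation.TransGen.head'_iff).mp hw
    have h1 : cluster E w ⊆ cluster E c := cluster_mono hcw
    have h2 : cluster E c ⊆ cluster E v :=
      cluster_mono (Relation.ReflTransGen.single hc)
    exact hnochild c hc (le_antisymm h2 (heq ▸ h1))
  have hiff23 : ((∃ u, E v u ∧ cluster E u = cluster E v) ∨ 2 ≤ S.ncard) ↔ S ≠ {v} := by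
    constructor
    · rintro (⟨u, hu, hcl⟩ | h2) hSv
      · have hv : v ∈ S := hSv ▸ rfl
        exact hv.2 u (Relation.TransGen.single hu) (le_of_eq hcl.symm)
      · rw [hSv, Set.ncard_singleton] at h2; omega
    · intro hne
      by_contra h
      push_neg at h
      obtain ⟨hnochild, hcard⟩ := h
      have hv := hvS hnochild
      apply hne
      apply Set.eq_singleton_iff_unique_mem.mpr
      refine ⟨hv, fun w hw => ?_⟩
      by_contra hwv
      have hpair : ({v, w} : Set V) ⊆ S := by
        intro x hx; rcases hx with rfl | rfl
        · exact hv
        · exact hw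
      have : 2 ≤ S.ncard := by
        have := Set.ncard_le_ncard hpair (Set.toFinite S)
        rwa [Set.ncard_pair (Ne.symm hwv)] at this
      omega
  have hiff13 : (¬ ∃ A : Set V, A ⊆ {x | IsLeaf E x} ∧ {w | IsLCA E A w} = {v}) ↔
      S ≠ {v} := by
    constructor
    · intro h hSv
      exact h ⟨cluster E v, fun x hx => hx.1, hSv⟩
    · intro hne ⟨A, _, hAlca⟩
      apply hne
      have hvA : IsLCA E A v := by
        have : v ∈ {w | IsLCA E A w} := hAlca ▸ rfl
        exact this
      apply Set.eq_singleton_iff_unique_mem.mpr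
      constructor
      · refine ⟨le_refl _, fun w hw hsub => ?_⟩
        exact hvA.2 w hw (hvA.1.trans hsub)
      · intro w hw
        have hAw : A ⊆ cluster E w := hvA.1.trans hw.1
        obtain ⟨u, hwu, hulca⟩ := exists_lca hacyc A w hAw
        have huv : u = v := by
          have : u ∈ {w | IsLCA E A w} := hulca
          rw [hAlca] at this; exact this
        rw [huv] at hwu
        rcases Relation.reflTransGen_iff_eq_or_transGen.mp hwu with rfl | htr
        · rfl
        · exact absurd (le_refl (cluster E v)) (hw.2 v htr)
  exact ⟨hiff13.trans hiff23.symm, hiff23⟩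
end

section
/- Let G be a connected DAG on X and v a vertex such that v ∉ LCA_G(A) for every nonempty A ⊆ X. Then G ⊖ v is connected (as an undirected graph). -/
/-- The edge relation of `G ⊖ v`. -/
def ominus {V : Type*} (E : V → V → Prop) (v : V) : V → V → Prop :=
  fun p q => (p ≠ v ∧ q ≠ v) ∧ (E p q ∨ (E p v ∧ E v q))

/-- In a finite acyclic digraph, every vertex reaches a leaf. -/
lemma exists_leaf {V : Type*} [Fintype V] (E : V → V → Prop) (hacyc : Acyclic E) (x : V) :
    ∃ l, IsLeaf E l ∧ Relation.ReflTransGen E x l := by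
  haveI : IsTrans V (fun a b => Relation.TransGen E b a) := ⟨fun a b c h1 h2 => h2.trans h1⟩
  haveI : IsIrrefl V (fun a b => Relation.TransGen E b a) := ⟨hacyc⟩
  have hwf := Finite.wellFounded_of_trans_of_irrefl (fun a b : V => Relation.TransGen E b a)
  induction x using hwf.induction with
  | _ x ih =>
    by_cases h : IsLeaf E x
    · exact ⟨x, h, .refl⟩
    · simp only [IsLeaf, not_forall, not_not] at h
      obtain ⟨c, hc⟩ := h
      obtain ⟨l, hl, hp⟩ := ih c (.single hc)
      exact ⟨l, hl, .head hc hp⟩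

/-- Directed paths among strict descendants of `v` lift to `G ⊖ v`. -/
lemma lift_path {V : Type*} (E : V → V → Prop) (hacyc : Acyclic E) (v : V) {x y : V}
    (h : Relation.ReflTransGen E x y) :
    Relation.TransGen E v x →
      Relation.ReflTransGen (fun a b => ominus E v a b ∨ ominus E v b a) x y := by
  induction h using Relation.ReflTransGen.head_induction_on with
  | refl => exact fun _ => .refl
  | @head a b hab hb ih =>
    intro hx
    have hb' : Relation.TransGen E v b := hx.tail hab
    have ha : a ≠ v := fun h => hacyc v (h ▸ hx)
    have hbv : b ≠ v := fun h => hacyc v (h ▸ hb')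
    exact .head (Or.inl ⟨⟨ha, hbv⟩, Or.inl hab⟩) (ih hb')

/-- If `G` is a connected DAG and `v` is not an LCA of any nonempty set of
leaves, then `G ⊖ v` is connected (as an undirected graph on `V \ {v}`). -/
theorem ominus_connected {V : Type*} [Fintype V] (E : V → V → Prop)
    (hacyc : Acyclic E)
    (hconn : ∀ p q : V, Relation.ReflTransGen (fun a b => E a b ∨ E b a) p q)
    (v : V)
    (hnotLCA : ∀ A : Set V, A ⊆ {x | IsLeaf E x} → A.Nonempty → ¬ IsLCA E A v) :
    ∀ p q : V, p ≠ v → q ≠ v →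
      Relation.ReflTransGen (fun a b => ominus E v a b ∨ ominus E v b a) p q := by
  set U' : V → V → Prop := fun a b => ominus E v a b ∨ ominus E v b a with hU'
  have hsymm : Symmetric U' := fun a b h => h.symm
  have hsympath : ∀ {a b : V}, Relation.ReflTransGen U' a b → Relation.ReflTransGen U' b a :=
    fun h => by
      induction h with
      | refl => exact .refl
      | tail _ hbc ih => exact .head (hsymm hbc) ih
  -- v is not a leaf
  have hnl : ¬ IsLeaf E v := by
    intro hl
    refine hnotLCA {v} (by intro x hx; simp_all) ⟨v, rfl⟩ ⟨?_, ?_⟩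
    · intro x hx; rcases hx with rfl; exact ⟨hl, .refl⟩
    · intro w hw _
      obtain ⟨c, hc, -⟩ := Relation.TransGen.head'_iff.mp hw
      exact hl _ hc
  obtain ⟨c₀, hc₀⟩ : ∃ c, E v c := by
    by_contra h; push_neg at h; exact hnl h
  -- crossing lemma: any two neighbors of v are connected in G ⊖ v
  have cross : ∀ a b : V, a ≠ v → b ≠ v → (E a v ∨ E v a) → (E b v ∨ E v b) →
      Relation.ReflTransGen U' a b := by
    intro a b ha hb hav hbv
    have hc₀v : c₀ ≠ v := fun h => hacyc v (.single (h ▸ hc₀))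
    rcases hav with hav | hav <;> rcases hbv with hbv | hbv
    · -- both parents: go through child c₀
      exact .head (Or.inl ⟨⟨ha, hc₀v⟩, Or.inr ⟨hav, hc₀⟩⟩)
        (.single (Or.inr ⟨⟨hb, hc₀v⟩, Or.inr ⟨hbv, hc₀⟩⟩))
    · exact .single (Or.inl ⟨⟨ha, hb⟩, Or.inr ⟨hav, hbv⟩⟩)
    · exact .single (Or.inr ⟨⟨hb, ha⟩, Or.inr ⟨hbv, hav⟩⟩)
    · -- both children
      by_cases hp : ∃ p, E p v
      · obtain ⟨p, hpv⟩ := hp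
        have hpne : p ≠ v := fun h => hacyc v (.single (h ▸ hpv))
        exact .head (Or.inr ⟨⟨hpne, ha⟩, Or.inr ⟨hpv, hav⟩⟩)
          (.single (Or.inl ⟨⟨hpne, hb⟩, Or.inr ⟨hpv, hbv⟩⟩))
      · -- v has no parents: use the LCA hypothesis on the cluster of v
        push_neg at hp
        obtain ⟨la, hla, hpa⟩ := exists_leaf E hacyc a
        have hlaA : la ∈ cluster E v := ⟨hla, .head hav hpa⟩
        have := hnotLCA (cluster E v) (fun x hx => hx.1) ⟨la, hlaA⟩
        simp only [IsLCA, not_and, not_forall, not_not] at this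
        obtain ⟨w, hw, hsub⟩ := this (fun x hx => hx)
        obtain ⟨lb, hlb, hpb⟩ := exists_leaf E hacyc b
        have hlbA : lb ∈ cluster E v := ⟨hlb, .head hbv hpb⟩
        have hwla : Relation.ReflTransGen E w la := (hsub hlaA).2
        have hwlb : Relation.ReflTransGen E w lb := (hsub hlbA).2
        have p1 := lift_path E hacyc v hpa (.single hav)
        have p2 := lift_path E hacyc v hwla hw
        have p3 := lift_path E hacyc v hwlb hw
        have p4 := lift_path E hacyc v hpb (.single hbv)
        exact ((p1.trans (hsympath p2)).trans p3).trans (hsympath p4)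
  intro p q hp hq
  have main : ∀ x : V, Relation.ReflTransGen (fun a b => E a b ∨ E b a) x q →
      (x ≠ v → Relation.ReflTransGen U' x q) ∧
      (x = v → ∃ c, c ≠ v ∧ (E c v ∨ E v c) ∧ Relation.ReflTransGen U' c q) := by
    intro x h
    induction h using Relation.ReflTransGen.head_induction_on with
    | refl => exact ⟨fun _ => .refl, fun h => absurd h hq⟩
    | @head a b hab hb ih =>
      constructor
      · intro ha
        by_cases hbv : b = v
        · subst b
          obtain ⟨c, hc, hcv, hcq⟩ := ih.2 rfl
          have hav : E a v ∨ E v a := hab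
          exact (cross a c ha hc hav hcv).trans hcq
        · refine .head ?_ (ih.1 hbv)
          rcases hab with h | h
          · exact Or.inl ⟨⟨ha, hbv⟩, Or.inl h⟩
          · exact Or.inr ⟨⟨hbv, ha⟩, Or.inl h⟩
      · intro hav
        subst a
        by_cases hbv : b = v
        · subst b
          exact absurd (Relation.TransGen.single (hab.elim id id)) (hacyc v)
        · exact ⟨b, hbv, hab.symm, ih.1 hbv⟩
  exact (main p (hconn p q)).1 hp
end
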